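/- For every integer n ≥ 1, M_{4n+2} = 2n + 1 + M_{n+1}, where m_k (resp. M_k) is the minimum (resp. maximum) number of alternations among length-k factors of the Thue–Morse sequence. -/

import Mathlib

/-- The reduction of a word: replace each maximal run of identical characters
by a single character. -/
def red {α : Type*} [DecidableEq α] (w : List α) : List α :=
  w.destutter (· ≠ ·)

/-- The length-`k` factor of the infinite sequence `x` (1-indexed) starting at
position `i`. -/
def factorAt {α : Type*} (x : ℕ → α) (i k : ℕ) : List α :=
  (List.range k).map (fun j => x (i + j))

/-- The reduced factor complexity: the number of length-`n` factors of `x`,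
counted up to reduced-equivalence (`red v = red w`). -/
noncomputable def redFactorComplexity {α : Type*} [DecidableEq α]
    (x : ℕ → α) (n : ℕ) : ℕ :=
  Set.ncard { u : List α | ∃ i ≥ 1, u = red (factorAt x i n) }

/-- The Thue–Morse sequence (1-indexed): `t n` is the parity of the number of
1's in the binary expansion of `n - 1`. -/
def thueMorse (n : ℕ) : Bool :=
  decide ((Nat.digits 2 (n - 1)).sum % 2 = 1)

/-- The number of alternations (occurrences of 01 or 10) in a binary word. -/
def alt (w : List Bool) : ℕ :=
  (List.zipWith (fun a b => a != b) w w.tail).count true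

/-- The minimum number of alternations among length-`k` factors of Thue–Morse. -/
noncomputable def tmAltMin (k : ℕ) : ℕ :=
  sInf { a : ℕ | ∃ i ≥ 1, a = alt (factorAt thueMorse i k) }

/-- The maximum number of alternations among length-`k` factors of Thue–Morse. -/
noncomputable def tmAltMax (k : ℕ) : ℕ :=
  sSup { a : ℕ | ∃ i ≥ 1, a = alt (factorAt thueMorse i k) }

/-- The Thue–Morse morphism `0 → 01`, `1 → 10`. -/
def mu (w : List Bool) : List Bool :=
  w.flatMap (fun b => if b then [true, false] else [false, true])

/-- The regular paperfolding sequence (1-indexed): writing `n = n' * 2^k` with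
`n'` odd, `f n = 1` iff `n' ≡ 3 (mod 4)`. -/
def paperfold (n : ℕ) : Bool :=
  decide ((n / 2 ^ (n.factorization 2)) % 4 = 3)

/-- The reduced abelian complexity: the number of length-`n` factors of `x`,
counted up to the equivalence identifying `v` and `w` whenever `red v` is a
rearrangement of the characters of `red w`. -/
noncomputable def redAbelianComplexity {α : Type*} [DecidableEq α]
    (x : ℕ → α) (n : ℕ) : ℕ :=
  Set.ncard { m : Multiset α | ∃ i ≥ 1, m = ↑(red (factorAt x i n)) }

/-!
Since `t = μ(t)`, a factor `u` of `t` is `μ(v)` with at most one letter cut off at each end, where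
`v` is the factor of `t` whose `μ`-blocks cover `u`. A pair of adjacent letters inside a block
always alternates, and a pair straddling two blocks alternates exactly when the two corresponding
letters of `v` do not; hence `alt u + alt v = |u| - 1`. For `|u| = 4n + 2` this turns maximizing
`alt u` into minimizing `alt v` over `|v| ∈ {2n + 1, 2n + 2}`, and a second desubstitution turns
that back into maximizing over factors of length `n + 1`.
-/

open Finset

def altAt (x : ℕ → Bool) (p : ℕ) : ℕ := (x p != x (p + 1)).toNat

def altSum (x : ℕ → Bool) (i L : ℕ) : ℕ := ∑ p ∈ range L, altAt x (i + p)

lemma alt_cons_cons (a b : Bool) (l : List Bool) :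
    alt (a :: b :: l) = (a != b).toNat + alt (b :: l) := by
  cases a <;> cases b <;> simp [alt, add_comm]

lemma factorAt_succ {α : Type*} (x : ℕ → α) (i L : ℕ) :
    factorAt x i (L + 1) = x i :: factorAt x (i + 1) L := by
  simp only [factorAt, List.range_succ_eq_map, List.map_cons, List.map_map, Function.comp_def]
  simp [add_assoc, add_comm 1]

lemma altSum_succ (x : ℕ → Bool) (i L : ℕ) :
    altSum x i (L + 1) = altSum x i L + altAt x (i + L) :=
  sum_range_succ _ _

lemma altSum_succ' (x : ℕ → Bool) (i L : ℕ) :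
    altSum x i (L + 1) = altAt x i + altSum x (i + 1) L := by
  simp only [altSum, sum_range_succ', add_zero, add_comm, add_left_comm]

lemma alt_factorAt_succ (x : ℕ → Bool) (i L : ℕ) :
    alt (factorAt x i (L + 1)) = altSum x i L := by
  induction L generalizing i with
  | zero => rfl
  | succ L ih =>
    rw [factorAt_succ, factorAt_succ, alt_cons_cons, ← factorAt_succ, ih, altSum_succ']
    rfl

lemma altSum_le (x : ℕ → Bool) (i L : ℕ) : altSum x i L ≤ L := by
  simpa [altSum] using sum_le_card_nsmul (range L) (fun p => altAt x (i + p)) 1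
    (fun p _ => Bool.toNat_le _)

lemma thueMorse_two_mul_add_one (j : ℕ) : thueMorse (2 * j + 1) = thueMorse (j + 1) := by
  rcases j with _ | j
  · rfl
  · simp only [thueMorse, Nat.add_sub_cancel]
    rw [show 2 * (j + 1) = 0 + 2 * (j + 1) by ring, Nat.digits_add 2 one_lt_two 0 _ two_pos (by simp)]
    simp

lemma thueMorse_two_mul_add_two (j : ℕ) : thueMorse (2 * j + 2) = !thueMorse (j + 1) := by
  simp only [thueMorse, Nat.add_sub_cancel, show 2 * j + 2 - 1 = 1 + 2 * j by omega,
    Nat.digits_add 2 one_lt_two 1 j one_lt_two (by simp), List.sum_cons]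
  rcases Nat.mod_two_eq_zero_or_one (Nat.digits 2 j).sum with h | h <;> simp [h, Nat.add_mod]


lemma altAt_thueMorse_two_mul_add_one (k : ℕ) : altAt thueMorse (2 * k + 1) = 1 := by
  simp [altAt, thueMorse_two_mul_add_one, thueMorse_two_mul_add_two]

lemma altAt_thueMorse_two_mul_add_two (k : ℕ) :
    altAt thueMorse (2 * k + 2) + altAt thueMorse (k + 1) = 1 := by
  simp only [altAt, thueMorse_two_mul_add_two, show 2 * k + 2 + 1 = 2 * (k + 1) + 1 by ring,
    thueMorse_two_mul_add_one]
  cases thueMorse (k + 1) <;> cases thueMorse (k + 1 + 1) <;> rfl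

lemma altSum_thueMorse_odd_two_mul (j m : ℕ) :
    altSum thueMorse (2 * j + 1) (2 * m) + altSum thueMorse (j + 1) m = 2 * m := by
  induction m with
  | zero => rfl
  | succ m ih =>
    have h₁ := altAt_thueMorse_two_mul_add_one (j + m)
    have h₂ := altAt_thueMorse_two_mul_add_two (j + m)
    rw [show 2 * (m + 1) = 2 * m + 1 + 1 by ring, altSum_succ, altSum_succ, altSum_succ,
      show 2 * j + 1 + 2 * m = 2 * (j + m) + 1 by ring,
      show 2 * j + 1 + (2 * m + 1) = 2 * (j + m) + 2 by ring, show j + 1 + m = j + m + 1 by ring]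
    omega

lemma altSum_thueMorse_even_two_mul (j m : ℕ) :
    altSum thueMorse (2 * j + 2) (2 * m) + altSum thueMorse (j + 1) m = 2 * m := by
  induction m with
  | zero => rfl
  | succ m ih =>
    have h₁ := altAt_thueMorse_two_mul_add_two (j + m)
    have h₂ := altAt_thueMorse_two_mul_add_one (j + m + 1)
    rw [show 2 * (m + 1) = 2 * m + 1 + 1 by ring, altSum_succ, altSum_succ, altSum_succ,
      show 2 * j + 2 + 2 * m = 2 * (j + m) + 2 by ring,
      show 2 * j + 2 + (2 * m + 1) = 2 * (j + m + 1) + 1 by ring, show j + 1 + m = j + m + 1 by ring]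
    omega

lemma exists_altSum_thueMorse_two_mul {i : ℕ} (hi : 1 ≤ i) (m : ℕ) :
    ∃ j ≥ 1, altSum thueMorse i (2 * m) + altSum thueMorse j m = 2 * m := by
  obtain ⟨j, rfl | rfl⟩ : ∃ j, i = 2 * j + 1 ∨ i = 2 * j + 2 := ⟨(i - 1) / 2, by omega⟩
  · exact ⟨j + 1, by omega, altSum_thueMorse_odd_two_mul j m⟩
  · exact ⟨j + 1, by omega, altSum_thueMorse_even_two_mul j m⟩

lemma altSum_thueMorse_odd_two_mul_add_one (j m : ℕ) :
    altSum thueMorse (2 * j + 1) (2 * m + 1) + altSum thueMorse (j + 1) m = 2 * m + 1 := by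
  have := altSum_thueMorse_odd_two_mul j m
  rw [altSum_succ, show 2 * j + 1 + 2 * m = 2 * (j + m) + 1 by ring,
    altAt_thueMorse_two_mul_add_one]
  omega

lemma altSum_thueMorse_even_two_mul_add_one (j m : ℕ) :
    altSum thueMorse (2 * j + 2) (2 * m + 1) + altSum thueMorse (j + 1) (m + 1) = 2 * m + 1 := by
  have h₁ := altAt_thueMorse_two_mul_add_two j
  have h₂ := altSum_thueMorse_odd_two_mul (j + 1) m
  rw [altSum_succ', altSum_succ', show 2 * j + 2 + 1 = 2 * (j + 1) + 1 by ring]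
  omega

lemma exists_altSum_thueMorse_two_mul_add_one_le {i : ℕ} (hi : 1 ≤ i) (m : ℕ) :
    ∃ j ≥ 1, altSum thueMorse i (2 * m + 1) + altSum thueMorse j m ≤ 2 * m + 1 := by
  obtain ⟨j, rfl | rfl⟩ : ∃ j, i = 2 * j + 1 ∨ i = 2 * j + 2 := ⟨(i - 1) / 2, by omega⟩
  · exact ⟨j + 1, by omega, (altSum_thueMorse_odd_two_mul_add_one j m).le⟩
  · refine ⟨j + 1, by omega, ?_⟩
    have := altSum_thueMorse_even_two_mul_add_one j m
    rw [altSum_succ thueMorse (j + 1) m] at this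
    omega

lemma tmAltMax_succ (k : ℕ) :
    tmAltMax (k + 1) = sSup {a | ∃ i ≥ 1, a = altSum thueMorse i k} := by
  simp only [tmAltMax, alt_factorAt_succ]

lemma bddAbove_altSum_thueMorse (k : ℕ) : BddAbove {a | ∃ i ≥ 1, a = altSum thueMorse i k} :=
  ⟨k, by rintro _ ⟨i, -, rfl⟩; exact altSum_le _ _ _⟩

lemma altSum_thueMorse_le_tmAltMax {i : ℕ} (hi : 1 ≤ i) (k : ℕ) :
    altSum thueMorse i k ≤ tmAltMax (k + 1) := by
  rw [tmAltMax_succ]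
  exact le_csSup (bddAbove_altSum_thueMorse k) ⟨i, hi, rfl⟩

lemma tmAltMax_succ_le {k b : ℕ} (h : ∀ i ≥ 1, altSum thueMorse i k ≤ b) :
    tmAltMax (k + 1) ≤ b := by
  rw [tmAltMax_succ]
  exact csSup_le ⟨_, 1, le_rfl, rfl⟩ (by rintro _ ⟨i, hi, rfl⟩; exact h i hi)

lemma exists_altSum_thueMorse_eq_tmAltMax (k : ℕ) :
    ∃ i ≥ 1, altSum thueMorse i k = tmAltMax (k + 1) := by
  rw [tmAltMax_succ]
  obtain ⟨i, hi, h⟩ := Nat.sSup_mem (by exact ⟨_, 1, le_rfl, rfl⟩) (bddAbove_altSum_thueMorse k)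
  exact ⟨i, hi, h.symm⟩

theorem stmt9_general (n : ℕ) :
    tmAltMax (4 * n + 2) = 2 * n + 1 + tmAltMax (n + 1) := by
  rw [show 4 * n + 2 = 2 * (2 * n) + 1 + 1 by ring]
  apply le_antisymm
  · refine tmAltMax_succ_le fun i hi => ?_
    obtain ⟨j, hj, hij⟩ := exists_altSum_thueMorse_two_mul_add_one_le hi (2 * n)
    obtain ⟨j', hj', hjj'⟩ := exists_altSum_thueMorse_two_mul hj n
    have := altSum_thueMorse_le_tmAltMax hj' n
    omega
  · obtain ⟨j, hj, hmax⟩ := exists_altSum_thueMorse_eq_tmAltMax n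
    obtain ⟨j, rfl⟩ : ∃ j₀, j = j₀ + 1 := ⟨j - 1, by omega⟩
    have h₁ := altSum_thueMorse_odd_two_mul j n
    have h₂ := altSum_thueMorse_odd_two_mul_add_one (2 * j) (2 * n)
    have := altSum_thueMorse_le_tmAltMax (i := 2 * (2 * j) + 1) (by omega) (2 * (2 * n) + 1)
    omega

theorem stmt9 (n : ℕ) (hn : 1 ≤ n) :
    tmAltMax (4 * n + 2) = 2 * n + 1 + tmAltMax (n + 1) :=
  stmt9_general n
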